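/- arXiv:1510.03986 — 7 statements merged into one kernel-verified Lean document; each statement's English description precedes it below -/
import Mathlib

section
/- T is injective on W̃: every x ∈ W̃ with T x = 0 satisfies x = 0. (Abstract form of Lemma 3.2(1) of the paper: for a compressable operator 𝒟, the restriction of ∂*_ρ∘𝒟 to sections of im(∂*_ρ) is injective; here the compressability hypothesis enters only through the stated filtration and eigenvalue conditions on T.) -/
/-!
On the kernel of `T`, `aeval T p` is multiplication by `p.eval 0`, which for
`p = ∏ r, (X - C (a ℓ r))` is `∏ r, (-a ℓ r) ≠ 0`. So a kernel vector lying in `F ℓ` already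
lies in `F (ℓ + 1)`; descending the filtration from `F 0 = W̃` puts it in `F N = 0`.
-/

open Polynomial

theorem Polynomial.eval_zero_prod_X_sub_C_ne_zero {R ι : Type*} [CommRing R] [IsDomain R]
    [Fintype ι] {a : ι → R} (ha : ∀ i, a i ≠ 0) : (∏ i, (X - C (a i))).eval 0 ≠ 0 := by
  simpa [eval_prod, Finset.prod_ne_zero_iff, neg_ne_zero] using ha

theorem Module.End.mem_of_aeval_apply_mem_of_apply_eq_zero {K M : Type*} [Field K]
    [AddCommGroup M] [Module K M] {T : Module.End K M} {p : K[X]} {S : Submodule K M} {x : M}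
    (hx : T x = 0) (hp : p.eval 0 ≠ 0) (h : aeval T p x ∈ S) : x ∈ S := by
  rw [Module.End.aeval_apply_of_mem_apply_eq_smul (μ := 0) (by rw [hx, zero_smul])] at h
  exact (S.smul_mem_iff hp).mp h

theorem mem_of_mem_zero_of_forall_lt_mem_succ {α : Type*} {F : ℕ → Set α} {N : ℕ} {x : α}
    (h0 : x ∈ F 0) (hstep : ∀ ℓ < N, x ∈ F ℓ → x ∈ F (ℓ + 1)) : x ∈ F N := by
  induction N with
  | zero => exact h0
  | succ n ih => exact hstep n n.lt_succ_self (ih fun ℓ hℓ => hstep ℓ (by omega))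

theorem compressable_injective_on_image_general {W : Type*} [AddCommGroup W] [Module ℝ W]
    (Wtil : Submodule ℝ W)
    (T : Module.End ℝ W)
    (N : ℕ) (F : ℕ → Submodule ℝ W)
    (hF0 : F 0 = Wtil) (hFN : F N = ⊥)
    (j : ℕ → ℕ) (a : (ℓ : ℕ) → Fin (j ℓ) → ℝ)
    (ha0 : ∀ ℓ < N, ∀ r, a ℓ r ≠ 0)
    (hdiag : ∀ ℓ < N, ∀ x ∈ F ℓ,
      (aeval T (∏ r : Fin (j ℓ), (X - C (a ℓ r)))) x ∈ F (ℓ + 1)) :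
    ∀ x ∈ Wtil, T x = 0 → x = 0 := by
  intro x hx hTx
  have hstep : ∀ ℓ < N, x ∈ F ℓ → x ∈ F (ℓ + 1) := fun ℓ hℓ hxℓ =>
    Module.End.mem_of_aeval_apply_mem_of_apply_eq_zero hTx
      (eval_zero_prod_X_sub_C_ne_zero (ha0 ℓ hℓ)) (hdiag ℓ hℓ x hxℓ)
  have hxN : x ∈ F N :=
    mem_of_mem_zero_of_forall_lt_mem_succ (F := fun ℓ => (F ℓ : Set W)) (hF0 ▸ hx) hstep
  simpa [hFN] using hxN

/-- Abstract form of Lemma 3.2(1): for a compressable operator `𝒟`, the restriction of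
`∂*_ρ ∘ 𝒟` (here `T`) to (sections of) `im ∂*_ρ` (here `W̃ = Wtil`) is injective. -/
theorem compressable_injective_on_image {W : Type*} [AddCommGroup W] [Module ℝ W]
    (Wtil Wbar : Submodule ℝ W) (hWW : Wtil ≤ Wbar)
    (T : Module.End ℝ W) (hrange : LinearMap.range T ≤ Wtil)
    (N : ℕ) (F : ℕ → Submodule ℝ W)
    (hF0 : F 0 = Wtil) (hFN : F N = ⊥)
    (hdec : ∀ ℓ : ℕ, F (ℓ + 1) ≤ F ℓ)
    (hTF : ∀ ℓ : ℕ, ∀ x ∈ F ℓ, T x ∈ F ℓ)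
    (j : ℕ → ℕ) (a : (ℓ : ℕ) → Fin (j ℓ) → ℝ)
    (ha0 : ∀ ℓ < N, ∀ r, a ℓ r ≠ 0)
    (hainj : ∀ ℓ < N, Function.Injective (a ℓ))
    (hdiag : ∀ ℓ < N, ∀ x ∈ F ℓ,
      (aeval T (∏ r : Fin (j ℓ), (X - C (a ℓ r)))) x ∈ F (ℓ + 1)) :
    ∀ x ∈ Wtil, T x = 0 → x = 0 :=
  compressable_injective_on_image_general Wtil T N F hF0 hFN j a ha0 hdiag
end

section
/- For each ℓ < N define the ℝ-linear map S_ℓ := ((−1)^{j_ℓ}/∏_{r=1}^{j_ℓ} a^ℓ_r) · ∏_{r=1}^{j_ℓ}(T − a^ℓ_r·id) : W → W (so S_ℓ = id when j_ℓ = 0). Then: (i) S_ℓ x − x ∈ W̃ for every x ∈ W; (ii) T ∘ S_ℓ = S_ℓ ∘ T; (iii) S_ℓ maps F m into F m for every m; and (iv) S_ℓ maps F ℓ into F (ℓ+1). (Abstract form of Lemma 3.3 of the paper.) -/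
/-!
`S_ℓ` is a polynomial in `T` with constant term `1`, so `S_ℓ - id = T ∘ q(T)` for a polynomial `q`:
this gives `S_ℓ x - x ∈ range T ⊆ W̃` and the commutation with `T`. Every `T`-invariant submodule is
invariant under polynomials in `T`, and on `F ℓ` the operator `S_ℓ` is a scalar multiple of the
product assumed to map `F ℓ` into `F (ℓ + 1)`.
-/

open Polynomial

/-- The operator `S_ℓ = ((−1)^{j_ℓ} / ∏_r a^ℓ_r) · ∏_r (T − a^ℓ_r · id)`. -/
noncomputable def Sl {W : Type*} [AddCommGroup W] [Module ℝ W]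
    (T : Module.End ℝ W) {n : ℕ} (a : Fin n → ℝ) : Module.End ℝ W :=
  ((-1 : ℝ) ^ n / ∏ r, a r) • aeval T (∏ r, (X - C (a r)))

namespace Polynomial

theorem eval_zero_prod_X_sub_C {R : Type*} [CommRing R] {n : ℕ} (a : Fin n → R) :
    (∏ r, (X - C (a r))).eval 0 = (-1) ^ n * ∏ r, a r := by
  simp [eval_prod, Finset.prod_neg]

theorem commute_aeval_self {R A : Type*} [CommSemiring R] [Semiring A] [Algebra R A]
    (a : A) (p : R[X]) : Commute a (aeval a p) := by
  simpa using (Commute.all X p).map (aeval a)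

theorem aeval_apply_sub_self_mem_range {R M : Type*} [CommRing R] [AddCommGroup M] [Module R M]
    {p : R[X]} (hp : p.coeff 0 = 1) (f : Module.End R M) (x : M) :
    aeval f p x - x ∈ LinearMap.range f :=
  ⟨aeval f p.divX x, by conv_rhs => rw [← X_mul_divX_add p]; simp [hp]⟩

end Polynomial

section Sl

variable {W : Type*} [AddCommGroup W] [Module ℝ W] (T : Module.End ℝ W) {n : ℕ} (a : Fin n → ℝ)

noncomputable def slPoly : ℝ[X] :=
  C ((-1) ^ n / ∏ r, a r) * ∏ r, (X - C (a r))

theorem Sl_eq_aeval_slPoly : Sl T a = aeval T (slPoly a) := by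
  rw [Sl, slPoly, map_mul, aeval_C, Algebra.algebraMap_eq_smul_one, smul_mul_assoc, one_mul]

variable {a}

theorem coeff_zero_slPoly (ha : ∀ r, a r ≠ 0) : (slPoly a).coeff 0 = 1 := by
  have hprod : ∏ r, a r ≠ 0 := Finset.prod_ne_zero_iff.mpr fun r _ ↦ ha r
  rw [slPoly, coeff_C_mul, coeff_zero_eq_eval_zero, eval_zero_prod_X_sub_C]
  field_simp
  rw [← pow_mul, mul_comm, pow_mul, neg_one_sq, one_pow]

theorem Sl_apply_sub_self_mem_range (ha : ∀ r, a r ≠ 0) (x : W) :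
    Sl T a x - x ∈ LinearMap.range T := by
  rw [Sl_eq_aeval_slPoly]
  exact aeval_apply_sub_self_mem_range (coeff_zero_slPoly ha) T x

variable (a)

theorem commute_Sl : Commute T (Sl T a) := by
  rw [Sl_eq_aeval_slPoly]
  exact commute_aeval_self T _

theorem Sl_apply_mem_of_le_comap {q : Submodule ℝ W} (hq : q ≤ q.comap T) {x : W} (hx : x ∈ q) :
    Sl T a x ∈ q := by
  rw [Sl_eq_aeval_slPoly]
  exact aeval_apply_smul_mem_of_le_comap hx _ T hq

end Sl

theorem Sl_properties_general {W : Type*} [AddCommGroup W] [Module ℝ W]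
    (Wtil : Submodule ℝ W)
    (T : Module.End ℝ W) (hrange : LinearMap.range T ≤ Wtil)
    (N : ℕ) (F : ℕ → Submodule ℝ W)
    (hTF : ∀ ℓ : ℕ, ∀ x ∈ F ℓ, T x ∈ F ℓ)
    (j : ℕ → ℕ) (a : (ℓ : ℕ) → Fin (j ℓ) → ℝ)
    (ha0 : ∀ ℓ < N, ∀ r, a ℓ r ≠ 0)
    (hdiag : ∀ ℓ < N, ∀ x ∈ F ℓ,
      (aeval T (∏ r : Fin (j ℓ), (X - C (a ℓ r)))) x ∈ F (ℓ + 1))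
    (ℓ : ℕ) (hℓ : ℓ < N) :
    (∀ x : W, Sl T (a ℓ) x - x ∈ Wtil) ∧
    (T ∘ₗ Sl T (a ℓ) = Sl T (a ℓ) ∘ₗ T) ∧
    (∀ m : ℕ, ∀ x ∈ F m, Sl T (a ℓ) x ∈ F m) ∧
    (∀ x ∈ F ℓ, Sl T (a ℓ) x ∈ F (ℓ + 1)) :=
  ⟨fun x ↦ hrange (Sl_apply_sub_self_mem_range T (ha0 ℓ hℓ) x),
    (commute_Sl T (a ℓ)).eq,
    fun m _ hx ↦ Sl_apply_mem_of_le_comap T (a ℓ) (hTF m) hx,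
    fun x hx ↦ (F (ℓ + 1)).smul_mem _ (hdiag ℓ hℓ x hx)⟩

/-- Abstract form of Lemma 3.3: the basic properties of the operators `S_ℓ`. -/
theorem Sl_properties {W : Type*} [AddCommGroup W] [Module ℝ W]
    (Wtil Wbar : Submodule ℝ W) (hWW : Wtil ≤ Wbar)
    (T : Module.End ℝ W) (hrange : LinearMap.range T ≤ Wtil)
    (N : ℕ) (F : ℕ → Submodule ℝ W)
    (hF0 : F 0 = Wtil) (hFN : F N = ⊥)
    (hdec : ∀ ℓ : ℕ, F (ℓ + 1) ≤ F ℓ)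
    (hTF : ∀ ℓ : ℕ, ∀ x ∈ F ℓ, T x ∈ F ℓ)
    (j : ℕ → ℕ) (a : (ℓ : ℕ) → Fin (j ℓ) → ℝ)
    (ha0 : ∀ ℓ < N, ∀ r, a ℓ r ≠ 0)
    (hainj : ∀ ℓ < N, Function.Injective (a ℓ))
    (hdiag : ∀ ℓ < N, ∀ x ∈ F ℓ,
      (aeval T (∏ r : Fin (j ℓ), (X - C (a ℓ r)))) x ∈ F (ℓ + 1))
    (ℓ : ℕ) (hℓ : ℓ < N) :
    (∀ x : W, Sl T (a ℓ) x - x ∈ Wtil) ∧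
    (T ∘ₗ Sl T (a ℓ) = Sl T (a ℓ) ∘ₗ T) ∧
    (∀ m : ℕ, ∀ x ∈ F m, Sl T (a ℓ) x ∈ F m) ∧
    (∀ x ∈ F ℓ, Sl T (a ℓ) x ∈ F (ℓ + 1)) :=
  Sl_properties_general Wtil T hrange N F hTF j a ha0 hdiag ℓ hℓ
end

section
/- Define S := S_{N−1} ∘ ⋯ ∘ S_1 ∘ S_0 : W → W, where S_ℓ := ((−1)^{j_ℓ}/∏_{r=1}^{j_ℓ} a^ℓ_r) · ∏_{r=1}^{j_ℓ}(T − a^ℓ_r·id). Then S is given by a polynomial in T (there exists a polynomial p ∈ ℝ[X] with S equal to the evaluation of p at T), and S satisfies: (i) S x − x ∈ W̃ for every x ∈ W; (ii) S x = 0 for every x ∈ W̃; and (iii) T(S x) = 0 for every x ∈ W. (Abstract form of the existence part of Theorem 3.3 of the paper: the splitting operator is a universal polynomial in ∂*_ρ∘𝒟.) -/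
/-!
Each factor `S_ℓ` is `aeval T` of a polynomial with constant term `1`, hence so is `S`; therefore
`S x - x` lies in the range of `T`, which is contained in `W̃`. On `W̃ = F 0` the factor `S_ℓ`
maps `F ℓ` into `F (ℓ + 1)`, so `S` sends `W̃` into `F N = 0`. Finally `S` commutes with `T`,
so `T (S x) = S (T x) = 0` because `T x ∈ W̃`.
-/

open Polynomial

/-- The composite `S_{n−1} ∘ ⋯ ∘ S_1 ∘ S_0`. -/
noncomputable def Scomp {W : Type*} [AddCommGroup W] [Module ℝ W]
    (T : Module.End ℝ W) (j : ℕ → ℕ) (a : (ℓ : ℕ) → Fin (j ℓ) → ℝ) :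
    ℕ → Module.End ℝ W
  | 0 => LinearMap.id
  | n + 1 => Sl T (a n) ∘ₗ Scomp T j a n

lemma aeval_apply_sub_self_mem_range {R M : Type*} [CommRing R] [AddCommGroup M] [Module R M]
    (f : Module.End R M) {q : R[X]} (hq : q.coeff 0 = 1) (x : M) :
    aeval f q x - x ∈ LinearMap.range f := by
  obtain ⟨r, hr⟩ : X ∣ q - 1 := by simp [X_dvd_iff, hq]
  refine ⟨aeval f r x, ?_⟩
  rw [eq_add_of_sub_eq' hr, map_add, map_one, map_mul, aeval_X, LinearMap.add_apply,
    Module.End.one_apply, Module.End.mul_apply, add_sub_cancel_left]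

lemma apply_aeval_apply {R M : Type*} [CommRing R] [AddCommGroup M] [Module R M]
    (f : Module.End R M) (p : R[X]) (x : M) : f (aeval f p x) = aeval f p (f x) := by
  have h := (Commute.all X p).map (aeval f)
  rw [aeval_X] at h
  exact LinearMap.congr_fun h.eq x

noncomputable def splittingFactor {n : ℕ} (a : Fin n → ℝ) : ℝ[X] :=
  C ((-1 : ℝ) ^ n / ∏ r, a r) * ∏ r, (X - C (a r))

lemma splittingFactor_coeff_zero {n : ℕ} {a : Fin n → ℝ} (ha : ∀ r, a r ≠ 0) :
    (splittingFactor a).coeff 0 = 1 := by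
  have hprod : (∏ r, (X - C (a r))).coeff 0 = (-1 : ℝ) ^ n * ∏ r, a r := by
    simp [coeff_zero_prod, Finset.prod_neg]
  have hne : ∏ r, a r ≠ 0 := Finset.prod_ne_zero_iff.mpr fun r _ => ha r
  rw [splittingFactor, mul_coeff_zero, coeff_C_zero, hprod]
  calc _ = ((-1 : ℝ) ^ n * (-1) ^ n) * ((∏ r, a r)⁻¹ * ∏ r, a r) := by ring
    _ = 1 := by rw [← mul_pow, neg_one_mul, neg_neg, one_pow, inv_mul_cancel₀ hne, one_mul]

section

variable {W : Type*} [AddCommGroup W] [Module ℝ W] (T : Module.End ℝ W)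

lemma Sl_eq_aeval {n : ℕ} (a : Fin n → ℝ) : Sl T a = aeval T (splittingFactor a) := by
  rw [Sl, splittingFactor, Algebra.smul_def, map_mul, aeval_C]

lemma Scomp_eq_aeval_prod (j : ℕ → ℕ) (a : (ℓ : ℕ) → Fin (j ℓ) → ℝ) (n : ℕ) :
    Scomp T j a n = aeval T (∏ ℓ ∈ Finset.range n, splittingFactor (a ℓ)) := by
  induction n with
  | zero => rw [Finset.prod_range_zero, map_one]; rfl
  | succ n ih =>
    rw [Finset.prod_range_succ, mul_comm, map_mul, ← Sl_eq_aeval, ← ih]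
    rfl

lemma Scomp_apply_mem (F : ℕ → Submodule ℝ W) (j : ℕ → ℕ) (a : (ℓ : ℕ) → Fin (j ℓ) → ℝ) (n : ℕ)
    (hstep : ∀ ℓ < n, ∀ x ∈ F ℓ, aeval T (∏ r : Fin (j ℓ), (X - C (a ℓ r))) x ∈ F (ℓ + 1))
    {x : W} (hx : x ∈ F 0) : Scomp T j a n x ∈ F n := by
  induction n with
  | zero => exact hx
  | succ n ih =>
    exact (F (n + 1)).smul_mem _
      (hstep n n.lt_succ_self _ (ih fun ℓ hℓ => hstep ℓ (hℓ.trans n.lt_succ_self)))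

end

theorem splitting_operator_exists_general {W : Type*} [AddCommGroup W] [Module ℝ W]
    (Wtil : Submodule ℝ W)
    (T : Module.End ℝ W) (hrange : LinearMap.range T ≤ Wtil)
    (N : ℕ) (F : ℕ → Submodule ℝ W)
    (hF0 : F 0 = Wtil) (hFN : F N = ⊥)
    (j : ℕ → ℕ) (a : (ℓ : ℕ) → Fin (j ℓ) → ℝ)
    (ha0 : ∀ ℓ < N, ∀ r, a ℓ r ≠ 0)
    (hdiag : ∀ ℓ < N, ∀ x ∈ F ℓ,
      (aeval T (∏ r : Fin (j ℓ), (X - C (a ℓ r)))) x ∈ F (ℓ + 1)) :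
    (∃ p : Polynomial ℝ, Scomp T j a N = aeval T p) ∧
    (∀ x : W, Scomp T j a N x - x ∈ Wtil) ∧
    (∀ x ∈ Wtil, Scomp T j a N x = 0) ∧
    (∀ x : W, T (Scomp T j a N x) = 0) := by
  have hcoeff : (∏ ℓ ∈ Finset.range N, splittingFactor (a ℓ)).coeff 0 = 1 := by
    rw [coeff_zero_prod]
    exact Finset.prod_eq_one fun ℓ hℓ =>
      splittingFactor_coeff_zero (ha0 ℓ (Finset.mem_range.mp hℓ))
  have hkill : ∀ x ∈ Wtil, Scomp T j a N x = 0 := fun x hx => by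
    simpa [hFN] using Scomp_apply_mem T F j a N hdiag (hF0 ▸ hx)
  refine ⟨⟨_, Scomp_eq_aeval_prod T j a N⟩, fun x => ?_, hkill, fun x => ?_⟩
  · rw [Scomp_eq_aeval_prod]
    exact hrange (aeval_apply_sub_self_mem_range T hcoeff x)
  · rw [Scomp_eq_aeval_prod, apply_aeval_apply, ← Scomp_eq_aeval_prod]
    exact hkill _ (hrange ⟨x, rfl⟩)

/-- Abstract form of the existence part of Theorem 3.3: the splitting operator
`S = S_{N−1} ∘ ⋯ ∘ S_0` is a (universal) polynomial in `T = ∂*_ρ ∘ 𝒟` and satisfies the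
basic properties of a splitting operator. -/
theorem splitting_operator_exists {W : Type*} [AddCommGroup W] [Module ℝ W]
    (Wtil Wbar : Submodule ℝ W) (hWW : Wtil ≤ Wbar)
    (T : Module.End ℝ W) (hrange : LinearMap.range T ≤ Wtil)
    (N : ℕ) (F : ℕ → Submodule ℝ W)
    (hF0 : F 0 = Wtil) (hFN : F N = ⊥)
    (hdec : ∀ ℓ : ℕ, F (ℓ + 1) ≤ F ℓ)
    (hTF : ∀ ℓ : ℕ, ∀ x ∈ F ℓ, T x ∈ F ℓ)
    (j : ℕ → ℕ) (a : (ℓ : ℕ) → Fin (j ℓ) → ℝ)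
    (ha0 : ∀ ℓ < N, ∀ r, a ℓ r ≠ 0)
    (hainj : ∀ ℓ < N, Function.Injective (a ℓ))
    (hdiag : ∀ ℓ < N, ∀ x ∈ F ℓ,
      (aeval T (∏ r : Fin (j ℓ), (X - C (a ℓ r)))) x ∈ F (ℓ + 1)) :
    (∃ p : Polynomial ℝ, Scomp T j a N = aeval T p) ∧
    (∀ x : W, Scomp T j a N x - x ∈ Wtil) ∧
    (∀ x ∈ Wtil, Scomp T j a N x = 0) ∧
    (∀ x : W, T (Scomp T j a N x) = 0) :=
  splitting_operator_exists_general Wtil T hrange N F hF0 hFN j a ha0 hdiag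
end

section
/- Fix ℓ < N with j_ℓ ≥ 1 and define the ℝ-linear map Q̃^ℓ := ∑_{r=1}^{j_ℓ} (1/(a^ℓ_r · ∏_{s≠r}(a^ℓ_r − a^ℓ_s))) · ∏_{s≠r}(T − a^ℓ_s·id) : W → W (the Lagrange interpolation polynomial of x ↦ 1/x at the nodes a^ℓ_1, …, a^ℓ_{j_ℓ}, evaluated at T). Then for every x ∈ F ℓ one has x − T(Q̃^ℓ x) ∈ F (ℓ+1). (Abstract form of Lemma 3.4 of the paper.) -/
/-!
`Q̃` interpolates `x ↦ 1/x` at the pairwise distinct nonzero nodes `a_r`, so `1 - X * Q̃` vanishes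
at every node and is therefore a multiple `(∏ r, (X - a_r)) * q`. Since `F ℓ` is `T`-invariant,
`q(T)` preserves `F ℓ`, and `∏ r, (T - a_r)` then carries it into `F (ℓ + 1)`.
-/

open Polynomial Finset

namespace Polynomial

section ReciprocalInterpolant

variable {K ι : Type*} [Field K] [Fintype ι] [DecidableEq ι]

/-- The paper's `Q̃`: the Lagrange interpolant of `x ↦ 1 / x` at the nodes `v i`. -/
noncomputable def reciprocalInterpolant (v : ι → K) : K[X] :=
  ∑ i, C (1 / (v i * ∏ k ∈ univ.erase i, (v i - v k))) * ∏ k ∈ univ.erase i, (X - C (v k))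

theorem eval_reciprocalInterpolant {v : ι → K} (hv : Function.Injective v) (i : ι) :
    (reciprocalInterpolant v).eval (v i) = 1 / v i := by
  have hprod : ∏ k ∈ univ.erase i, (v i - v k) ≠ 0 :=
    prod_ne_zero_iff.mpr fun k hk ↦ sub_ne_zero.mpr fun h ↦ (ne_of_mem_erase hk) (hv h).symm
  simp only [reciprocalInterpolant, eval_finsetSum, eval_mul, eval_C, eval_prod, eval_sub,
    eval_X]
  rw [sum_eq_single i]
  · field_simp
  · intro k _ hki
    exact mul_eq_zero_of_right _ (prod_eq_zero (mem_erase.mpr ⟨hki.symm, mem_univ i⟩) (sub_self _))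
  · exact fun hi ↦ absurd (mem_univ i) hi

theorem prod_X_sub_C_dvd_one_sub_X_mul_reciprocalInterpolant {v : ι → K}
    (hv : Function.Injective v) (hv0 : ∀ i, v i ≠ 0) :
    ∏ i, (X - C (v i)) ∣ 1 - X * reciprocalInterpolant v := by
  refine prod_dvd_of_coprime ((pairwise_coprime_X_sub_C hv).set_pairwise _) fun i _ ↦ ?_
  rw [dvd_iff_isRoot, IsRoot, eval_sub, eval_one, eval_mul, eval_X,
    eval_reciprocalInterpolant hv, mul_one_div_cancel (hv0 i), sub_self]

end ReciprocalInterpolant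

theorem aeval_apply_mem_of_dvd {R M : Type*} [CommSemiring R] [AddCommMonoid M] [Module R M]
    {T : Module.End R M} {S S' : Submodule R M} (hS : S ≤ S.comap T) {p r : R[X]}
    (hp : ∀ x ∈ S, aeval T p x ∈ S') (hpr : p ∣ r) {x : M} (hx : x ∈ S) :
    aeval T r x ∈ S' := by
  obtain ⟨q, rfl⟩ := hpr
  rw [map_mul, Module.End.mul_apply]
  exact hp _ (aeval_apply_smul_mem_of_le_comap hx q T hS)

end Polynomial

theorem lagrange_inverse_mod_filtration_general {W : Type*} [AddCommGroup W] [Module ℝ W]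
    (T : Module.End ℝ W)
    (N : ℕ) (F : ℕ → Submodule ℝ W)
    (hTF : ∀ ℓ : ℕ, ∀ x ∈ F ℓ, T x ∈ F ℓ)
    (j : ℕ → ℕ) (a : (ℓ : ℕ) → Fin (j ℓ) → ℝ)
    (ha0 : ∀ ℓ < N, ∀ r, a ℓ r ≠ 0)
    (hainj : ∀ ℓ < N, Function.Injective (a ℓ))
    (hdiag : ∀ ℓ < N, ∀ x ∈ F ℓ,
      (aeval T (∏ r : Fin (j ℓ), (X - C (a ℓ r)))) x ∈ F (ℓ + 1))
    (ℓ : ℕ) (hℓ : ℓ < N) :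
    ∀ x ∈ F ℓ,
      x - T ((aeval T (∑ r : Fin (j ℓ),
        C (1 / (a ℓ r * ∏ s ∈ Finset.univ.erase r, (a ℓ r - a ℓ s))) *
          ∏ s ∈ Finset.univ.erase r, (X - C (a ℓ s)))) x) ∈ F (ℓ + 1) := by
  intro x hx
  have hx' : x - T (aeval T (reciprocalInterpolant (a ℓ)) x) =
      aeval T (1 - X * reciprocalInterpolant (a ℓ)) x := by
    simp [Module.End.mul_apply]
  exact hx' ▸ aeval_apply_mem_of_dvd (hTF ℓ) (hdiag ℓ hℓ)
    (prod_X_sub_C_dvd_one_sub_X_mul_reciprocalInterpolant (hainj ℓ hℓ) (ha0 ℓ hℓ)) hx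

/-- Abstract form of Lemma 3.4: for the Lagrange-interpolation operator
`Q̃^ℓ = ∑_r (1/(a^ℓ_r · ∏_{s≠r}(a^ℓ_r − a^ℓ_s))) · ∏_{s≠r}(T − a^ℓ_s·id)` one has
`x − T(Q̃^ℓ x) ∈ F(ℓ+1)` for every `x ∈ F ℓ`. -/
theorem lagrange_inverse_mod_filtration {W : Type*} [AddCommGroup W] [Module ℝ W]
    (Wtil Wbar : Submodule ℝ W) (hWW : Wtil ≤ Wbar)
    (T : Module.End ℝ W) (hrange : LinearMap.range T ≤ Wtil)
    (N : ℕ) (F : ℕ → Submodule ℝ W)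
    (hF0 : F 0 = Wtil) (hFN : F N = ⊥)
    (hdec : ∀ ℓ : ℕ, F (ℓ + 1) ≤ F ℓ)
    (hTF : ∀ ℓ : ℕ, ∀ x ∈ F ℓ, T x ∈ F ℓ)
    (j : ℕ → ℕ) (a : (ℓ : ℕ) → Fin (j ℓ) → ℝ)
    (ha0 : ∀ ℓ < N, ∀ r, a ℓ r ≠ 0)
    (hainj : ∀ ℓ < N, Function.Injective (a ℓ))
    (hdiag : ∀ ℓ < N, ∀ x ∈ F ℓ,
      (aeval T (∏ r : Fin (j ℓ), (X - C (a ℓ r)))) x ∈ F (ℓ + 1))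
    (ℓ : ℕ) (hℓ : ℓ < N) (hj : 1 ≤ j ℓ) :
    ∀ x ∈ F ℓ,
      x - T ((aeval T (∑ r : Fin (j ℓ),
        C (1 / (a ℓ r * ∏ s ∈ Finset.univ.erase r, (a ℓ r - a ℓ s))) *
          ∏ s ∈ Finset.univ.erase r, (X - C (a ℓ s)))) x) ∈ F (ℓ + 1) :=
  lagrange_inverse_mod_filtration_general T N F hTF j a ha0 hainj hdiag ℓ hℓ
end

section
/- There exists an ℝ-linear map Q : W → W which is given by a polynomial in T (there exists a polynomial p ∈ ℝ[X] with Q equal to the evaluation of p at T), which maps W̃ into W̃ and satisfies T(Q x) = x for every x ∈ W̃. In particular, T restricts to a linear automorphism of W̃ whose inverse is given by a polynomial in T. (Abstract form of Theorem 3.4 of the paper.) -/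
/-!
The product `P` of all the polynomials `∏ᵣ (X - a^ℓ_r)` over the graded pieces annihilates `W̃`,
because each factor pushes `F ℓ` into `F (ℓ + 1)` and `F N = 0`. Its constant term
`∏ (-a^ℓ_r)` is nonzero, so writing `P = X · P.divX + P(0)` exhibits
`Q = -P(0)⁻¹ · P.divX(T)` as an inverse of `T` on `W̃`.
-/

open Polynomial

namespace Polynomial

variable {R M : Type*} [AddCommGroup M]

theorem aeval_prod_range_mapsTo [CommRing R] [Module R M] (f : Module.End R M)
    {F : ℕ → Submodule R M} (P : ℕ → R[X]) {m : ℕ}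
    (hP : ∀ ℓ < m, Set.MapsTo (aeval f (P ℓ)) (F ℓ) (F (ℓ + 1))) :
    Set.MapsTo (aeval f (∏ ℓ ∈ Finset.range m, P ℓ)) (F 0) (F m) := by
  induction m with
  | zero => simpa only [Finset.range_zero, Finset.prod_empty, map_one, Module.End.coe_one] using
      Set.mapsTo_id _
  | succ m ih =>
    rw [Finset.prod_range_succ, mul_comm, map_mul, Module.End.coe_mul]
    exact (hP m m.lt_succ_self).comp (ih fun ℓ hℓ => hP ℓ (hℓ.trans m.lt_succ_self))

theorem apply_aeval_divX_of_aeval_eq_zero [CommRing R] [Module R M] (f : Module.End R M)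
    (P : R[X]) {x : M} (hx : aeval f P x = 0) :
    f (aeval f P.divX x) = -P.coeff 0 • x := by
  have h := congrArg (fun p => aeval f p x) P.X_mul_divX_add
  simp only [map_add, map_mul, aeval_X, aeval_C, LinearMap.add_apply, Module.End.mul_apply,
    Module.algebraMap_end_apply, hx] at h
  rw [neg_smul, eq_neg_iff_add_eq_zero, h]

variable {K : Type*} [Field K] [Module K M]

theorem apply_aeval_inverse_of_aeval_eq_zero (f : Module.End K M) {P : K[X]}
    (hP : P.coeff 0 ≠ 0) {x : M} (hx : aeval f P x = 0) :
    f (aeval f (C (-(P.coeff 0)⁻¹) * P.divX) x) = x := by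
  rw [map_mul, aeval_C, Module.End.mul_apply, Module.algebraMap_end_apply, map_smul,
    apply_aeval_divX_of_aeval_eq_zero f P hx, smul_smul, neg_inv, inv_mul_cancel₀ (neg_ne_zero.2 hP),
    one_smul]

theorem aeval_apply_comm (f : Module.End K M) (q : K[X]) (x : M) :
    aeval f q (f x) = f (aeval f q x) := by
  simpa using congrArg (· x) ((Commute.all X q).map (aeval f)).eq.symm

end Polynomial

theorem Q_operator_exists_general {W : Type*} [AddCommGroup W] [Module ℝ W]
    (Wtil : Submodule ℝ W)
    (T : Module.End ℝ W) (hrange : LinearMap.range T ≤ Wtil)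
    (N : ℕ) (F : ℕ → Submodule ℝ W)
    (hF0 : F 0 = Wtil) (hFN : F N = ⊥)
    (j : ℕ → ℕ) (a : (ℓ : ℕ) → Fin (j ℓ) → ℝ)
    (ha0 : ∀ ℓ < N, ∀ r, a ℓ r ≠ 0)
    (hdiag : ∀ ℓ < N, ∀ x ∈ F ℓ,
      (aeval T (∏ r : Fin (j ℓ), (X - C (a ℓ r)))) x ∈ F (ℓ + 1)) :
    (∃ Q : Module.End ℝ W,
      (∃ p : Polynomial ℝ, Q = aeval T p) ∧
      (∀ x ∈ Wtil, Q x ∈ Wtil) ∧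
      (∀ x ∈ Wtil, T (Q x) = x)) ∧
    Function.Bijective
      (T.restrict (p := Wtil) (q := Wtil)
        (fun x _ => hrange (LinearMap.mem_range_self T x))) := by
  set P := ∏ ℓ ∈ Finset.range N, ∏ r : Fin (j ℓ), (X - C (a ℓ r))
  have hPW : ∀ x ∈ Wtil, aeval T P x = 0 := fun x hx => by
    simpa [hFN] using aeval_prod_range_mapsTo T _ hdiag (hF0 ▸ hx)
  have hP0 : P.coeff 0 ≠ 0 := by
    simp only [P, coeff_zero_eq_eval_zero, eval_prod, eval_sub, eval_X, eval_C, zero_sub]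
    exact Finset.prod_ne_zero_iff.2 fun ℓ hℓ =>
      Finset.prod_ne_zero_iff.2 fun r _ => neg_ne_zero.2 (ha0 ℓ (Finset.mem_range.1 hℓ) r)
  set q := C (-(P.coeff 0)⁻¹) * P.divX
  have hQW : ∀ x ∈ Wtil, aeval T q x ∈ Wtil := fun x hx =>
    aeval_apply_smul_mem_of_le_comap hx q T fun y _ => hrange (LinearMap.mem_range_self T y)
  have hTQ : ∀ x ∈ Wtil, T (aeval T q x) = x := fun x hx =>
    apply_aeval_inverse_of_aeval_eq_zero T hP0 (hPW x hx)
  refine ⟨⟨aeval T q, ⟨q, rfl⟩, hQW, hTQ⟩, Function.bijective_iff_has_inverse.2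
    ⟨(aeval T q).restrict hQW, fun x => Subtype.ext ?_, fun x => Subtype.ext (hTQ x x.2)⟩⟩
  simpa [aeval_apply_comm] using hTQ x x.2

/-- Abstract form of Theorem 3.4: there is an operator `Q`, given by a universal polynomial in
`T = ∂*_ρ ∘ 𝒟`, which maps `W̃` into `W̃` and is a right inverse for `T` on `W̃`; in
particular `T` restricts to a linear automorphism of `W̃`. -/
theorem Q_operator_exists {W : Type*} [AddCommGroup W] [Module ℝ W]
    (Wtil Wbar : Submodule ℝ W) (hWW : Wtil ≤ Wbar)
    (T : Module.End ℝ W) (hrange : LinearMap.range T ≤ Wtil)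
    (N : ℕ) (F : ℕ → Submodule ℝ W)
    (hF0 : F 0 = Wtil) (hFN : F N = ⊥)
    (hdec : ∀ ℓ : ℕ, F (ℓ + 1) ≤ F ℓ)
    (hTF : ∀ ℓ : ℕ, ∀ x ∈ F ℓ, T x ∈ F ℓ)
    (j : ℕ → ℕ) (a : (ℓ : ℕ) → Fin (j ℓ) → ℝ)
    (ha0 : ∀ ℓ < N, ∀ r, a ℓ r ≠ 0)
    (hainj : ∀ ℓ < N, Function.Injective (a ℓ))
    (hdiag : ∀ ℓ < N, ∀ x ∈ F ℓ,
      (aeval T (∏ r : Fin (j ℓ), (X - C (a ℓ r)))) x ∈ F (ℓ + 1)) :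
    (∃ Q : Module.End ℝ W,
      (∃ p : Polynomial ℝ, Q = aeval T p) ∧
      (∀ x ∈ Wtil, Q x ∈ Wtil) ∧
      (∀ x ∈ Wtil, T (Q x) = x)) ∧
    Function.Bijective
      (T.restrict (p := Wtil) (q := Wtil)
        (fun x _ => hrange (LinearMap.mem_range_self T x))) :=
  Q_operator_exists_general Wtil T hrange N F hF0 hFN j a ha0 hdiag
end

section
/- Assume that the composite ∂_k ∘ D_{k−1} : V_{k−1} → V_{k−1} is injective on W̃_{k−1} (the range of ∂_k). Then every φ ∈ V_k satisfying ∂_{k+1}(D_k φ) + D_{k−1}(∂_k φ) = 0 also satisfies ∂_k φ = 0 and ∂_{k+1}(D_k φ) = 0. Consequently, the kernel of the Laplacian □_k := ∂_{k+1}∘D_k + D_{k−1}∘∂_k equals {φ ∈ V_k : ∂_k φ = 0 and ∂_{k+1}(D_k φ) = 0}. (Abstract form of Proposition 3.6(1) of the paper.) -/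
namespace LinearMap

variable {R U V W : Type*} [Semiring R] [AddCommMonoid U] [Module R U]
  [AddCommMonoid V] [Module R V] [AddCommMonoid W] [Module R W]

/-- `□_k = ∂_{k+1} ∘ D_k + D_{k−1} ∘ ∂_k` with `d = ∂_k`, `d' = ∂_{k+1}`, `D = D_{k−1}`, `D' = D_k`. -/
def laplacian (d : V →ₗ[R] U) (d' : W →ₗ[R] V) (D : U →ₗ[R] V) (D' : V →ₗ[R] W) :
    V →ₗ[R] V :=
  d' ∘ₗ D' + D ∘ₗ d

variable {d : V →ₗ[R] U} {d' : W →ₗ[R] V} {D : U →ₗ[R] V} {D' : V →ₗ[R] W}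

theorem laplacian_apply (φ : V) : laplacian d d' D D' φ = d' (D' φ) + D (d φ) := rfl

/-- Applying `∂` to `□ φ = 0` kills the first summand since `∂ ∘ ∂' = 0`, leaving
`∂ (D (∂ φ)) = 0 = ∂ (D 0)` with both `∂ φ` and `0` in the range of `∂`. -/
theorem apply_eq_zero_of_laplacian_eq_zero (hdd : ∀ z, d (d' z) = 0)
    (hinj : Set.InjOn (fun x => d (D x)) (range d : Set U)) {φ : V}
    (h : laplacian d d' D D' φ = 0) : d φ = 0 := by
  have hdDd : d (D (d φ)) = d (D 0) := by
    simpa [laplacian_apply, hdd] using congrArg d h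
  exact hinj (mem_range_self d φ) (zero_mem (range d)) hdDd

theorem laplacian_eq_zero_iff (hdd : ∀ z, d (d' z) = 0)
    (hinj : Set.InjOn (fun x => d (D x)) (range d : Set U)) (φ : V) :
    laplacian d d' D D' φ = 0 ↔ d φ = 0 ∧ d' (D' φ) = 0 := by
  refine ⟨fun h => ?_, fun ⟨h₁, h₂⟩ => by simp [laplacian_apply, h₁, h₂]⟩
  have hdφ := apply_eq_zero_of_laplacian_eq_zero hdd hinj h
  refine ⟨hdφ, ?_⟩
  simpa [laplacian_apply, hdφ] using h

end LinearMap

/-- Abstract form of Proposition 3.6(1): if `∂_k ∘ D_{k−1}` is injective on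
`W̃_{k−1} = range ∂_k`, then every `φ` with `□_k φ = ∂_{k+1}(D_k φ) + D_{k−1}(∂_k φ) = 0`
satisfies `∂_k φ = 0` and `∂_{k+1}(D_k φ) = 0`; consequently the kernel of the Laplacian
`□_k` equals `{φ : ∂_k φ = 0 ∧ ∂_{k+1}(D_k φ) = 0}`. -/
theorem laplacian_kernel {Vkm Vk Vkp : Type*}
    [AddCommGroup Vkm] [Module ℝ Vkm] [AddCommGroup Vk] [Module ℝ Vk]
    [AddCommGroup Vkp] [Module ℝ Vkp]
    (dk : Vk →ₗ[ℝ] Vkm)    -- ∂_k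
    (dk1 : Vkp →ₗ[ℝ] Vk)   -- ∂_{k+1}
    (hcc : ∀ z : Vkp, dk (dk1 z) = 0)
    (Dkm : Vkm →ₗ[ℝ] Vk)   -- D_{k−1}
    (Dk : Vk →ₗ[ℝ] Vkp)    -- D_k
    (hinj : Set.InjOn (fun x : Vkm => dk (Dkm x)) (LinearMap.range dk : Set Vkm)) :
    (∀ φ : Vk, dk1 (Dk φ) + Dkm (dk φ) = 0 → dk φ = 0 ∧ dk1 (Dk φ) = 0) ∧
    {φ : Vk | dk1 (Dk φ) + Dkm (dk φ) = 0} =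
      {φ : Vk | dk φ = 0 ∧ dk1 (Dk φ) = 0} :=
  ⟨fun φ => (LinearMap.laplacian_eq_zero_iff hcc hinj φ).1,
    Set.ext fun φ => LinearMap.laplacian_eq_zero_iff hcc hinj φ⟩
end

section
/- Let A be a finite-dimensional real vector space equipped with: a decreasing family of subspaces (A^i)_{i∈ℤ} with A^{i+1} ⊆ A^i for all i, A^i = A for all sufficiently small i, and A^i = 0 for all sufficiently large i; a bilinear bracket {·,·} : A × A → A satisfying {A^i, A^j} ⊆ A^{i+j} for all i, j; and a nondegenerate symmetric bilinear form B on A which is invariant, i.e. B({x,y},z) = −B(y,{x,z}) for all x,y,z ∈ A, and such that for every i > 0 the subspace A^i equals {x ∈ A : B(x,y) = 0 for all y ∈ A^{−i+1}}. Then there exist natural numbers n, m and a basis of A of the form (X_1,…,X_n, A_1,…,A_m, Z_1,…,Z_n) such that: Z_i ∈ A^1 for all i; A_r ∈ A^0 for all r; B(X_i, X_j) = 0 for all i, j; B(A_r, X_i) = 0 for all r, i; B(X_i, Z_j) = δ_{ij} for all i, j; and {Z_i, X_i} ∈ A^0 for every i. Moreover, there exist elements A'_1,…,A'_m ∈ A^0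 with B(A'_r, A_s) = δ_{rs}, B(A'_r, X_i) = 0 and B(A'_r, Z_i) = 0 for all r, s, i, so that the B-dual basis of (X_1,…,X_n, A_1,…,A_m, Z_1,…,Z_n) is (Z_1,…,Z_n, A'_1,…,A'_m, X_1,…,X_n). (This is the fiberwise linear-algebra content of Lemma 2.3 of the paper on the existence of adapted local frames for the relative adjoint tractor bundle, applied to the filtered Lie algebra 𝔭/𝔭_+ with the form induced by the Killing form.) -/
/-! Take a basis of `A⁰` adapted to the flag `A⁰ ⊇ A¹ ⊇ A² ⊇ ⋯`; its members lying in `A¹` are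
the `Zᵢ`. As `A¹ = (A⁰)^⊥` is isotropic, vectors `B`-dual to the `Zᵢ` can be corrected by
multiples of the `Zᵢ` to become mutually orthogonal (the `Xᵢ`), and the remaining basis vectors
of `A⁰`, made orthogonal to the `Xᵢ`, are the `Aᵣ`. Since `dim A = dim A⁰ + dim A¹`, this is a
basis of `A`, and the `A'ᵣ` are read off its `B`-dual basis. If `Zᵢ ∈ Aᵏ \ Aᵏ⁺¹`, then `Aᵏ⁺¹` is
spanned by the `Zⱼ` with `j ≠ i`, so `Xᵢ ⊥ Aᵏ⁺¹`, i.e. `Xᵢ ∈ A⁻ᵏ`, whence `{Zᵢ, Xᵢ} ∈ A⁰`. -/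

open Module Submodule Set

section Filtration

variable {K V : Type*} [DivisionRing K] [AddCommGroup V] [Module K V]

theorem exists_linearIndepOn_span_inter_eq {W : ℤ → Submodule K V} (hW : Antitone W) {N : ℤ}
    (hN : ∀ i, N ≤ i → W i = ⊥) (a : ℤ) :
    ∃ s : Set V, LinearIndepOn K id s ∧ s ⊆ W a ∧ ∀ l, a ≤ l → span K (s ∩ W l) = W l := by
  have hbot : ∀ a, N ≤ a → ∃ s : Set V, LinearIndepOn K id s ∧ s ⊆ W a ∧
      ∀ l, a ≤ l → span K (s ∩ W l) = W l := fun a ha =>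
    ⟨∅, linearIndepOn_empty K id, empty_subset _, fun l hl => by simp [hN l (ha.trans hl)]⟩
  induction a using Int.inductionOn' (b := N) with
  | zero => exact hbot N le_rfl
  | succ a ha _ => exact hbot (a + 1) (by omega)
  | pred a _ ih =>
    obtain ⟨s, hs, hsW, hspan⟩ := ih
    obtain ⟨t, htW, hst, hWt, ht⟩ :=
      exists_linearIndepOn_id_extension hs (hsW.trans (hW (by omega : a - 1 ≤ a)))
    refine ⟨t, ht, htW, fun l hl => ?_⟩
    rcases hl.eq_or_lt with rfl | hlt
    · rw [inter_eq_left.2 htW]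
      exact le_antisymm (span_le.2 htW) hWt
    · refine le_antisymm (span_le.2 inter_subset_right) ?_
      exact (hspan l (by omega)).ge.trans (span_mono (inter_subset_inter_left _ hst))

theorem exists_mem_notMem_succ {W : ℤ → Submodule K V} {N : ℤ} (hN : ∀ i, N ≤ i → W i = ⊥)
    {x : V} (hx : x ≠ 0) {a : ℤ} (hxa : x ∈ W a) : ∃ k, a ≤ k ∧ x ∈ W k ∧ x ∉ W (k + 1) := by
  have hbdd : ∃ b, ∀ k, a ≤ k ∧ x ∈ W k → k ≤ b := ⟨N, fun k ⟨_, hk⟩ => by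
    by_contra! hNk
    rw [hN k hNk.le, mem_bot] at hk
    exact hx hk⟩
  obtain ⟨k, ⟨hak, hxk⟩, hmax⟩ := Int.exists_greatest_of_bdd hbdd ⟨a, le_rfl, hxa⟩
  exact ⟨k, hak, hxk, fun h => by linarith [hmax (k + 1) ⟨by omega, h⟩]⟩

theorem exists_fin_adapted_family [FiniteDimensional K V] {W : ℤ → Submodule K V}
    (hW : Antitone W) {N : ℤ} (hN : ∀ i, N ≤ i → W i = ⊥) (a : ℤ) :
    ∃ (m n : ℕ) (Y : Fin m → V) (Z : Fin n → V), LinearIndependent K (Sum.elim Y Z) ∧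
      span K (range (Sum.elim Y Z)) = W a ∧ (∀ j, Z j ∈ W (a + 1)) ∧
      ∀ l, a + 1 ≤ l → span K (range Z ∩ W l) = W l := by
  obtain ⟨s, hs, hsW, hspan⟩ := exists_linearIndepOn_span_inter_eq hW hN a
  have hfin : s.Finite := LinearIndependent.setFinite hs
  obtain ⟨m, Y, hY⟩ := (hfin.sdiff (t := W (a + 1))).fin_embedding
  obtain ⟨n, Z, hZ⟩ := (hfin.inter_of_left (W (a + 1))).fin_embedding
  have hYmem (r : Fin m) : Y r ∈ s \ W (a + 1) := hY ▸ mem_range_self r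
  have hZmem (j : Fin n) : Z j ∈ s ∩ W (a + 1) := hZ ▸ mem_range_self j
  have hrange : range (Sum.elim Y Z) = s := by
    rw [Set.Sum.elim_range, hY, hZ, sdiff_union_inter]
  have hinj : Function.Injective (Sum.elim Y Z) :=
    Y.injective.sumElim Z.injective fun r j h => (hYmem r).2 (h ▸ (hZmem j).2)
  refine ⟨m, n, Y, Z, (linearIndepOn_id_range_iff hinj).1 (hrange ▸ hs), ?_,
    fun j => (hZmem j).2, fun l hl => ?_⟩
  · rw [hrange, ← hspan a le_rfl, inter_eq_left.2 hsW]
  · rw [hZ, inter_assoc, inter_eq_right.2 (hW hl), hspan l (by omega)]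

end Filtration

namespace LinearMap.BilinForm

variable {K V ι κ : Type*} [Field K] [AddCommGroup V] [Module K V] {B : LinearMap.BilinForm K V}

theorem mem_orthogonal_span_of_forall {s : Set V} {x : V} (hx : ∀ y ∈ s, B y x = 0) :
    x ∈ B.orthogonal (span K s) :=
  fun _ hy => (span_le (p := LinearMap.ker (B.flip x))).2 hx hy

theorem apply_sub_sum_smul_eq_zero [Fintype ι] [DecidableEq ι] {W Y : ι → V}
    (hWY : ∀ i j, B (W i) (Y j) = if i = j then 1 else 0) (v : V) (j : ι) :
    B (v - ∑ i, B v (Y i) • W i) (Y j) = 0 := by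
  simp [hWY]

theorem exists_dual_family [DecidableEq ι] [FiniteDimensional K V] (hB : B.Nondegenerate)
    {Z : ι → V} (hZ : LinearIndependent K Z) :
    ∃ X : ι → V, ∀ i j, B (X i) (Z j) = if i = j then 1 else 0 := by
  classical
  let b := Basis.sumExtend hZ
  have : Finite (ι ⊕ Basis.sumExtendIndex hZ) := Module.Finite.finite_basis b
  have hb (j : ι) : b (Sum.inl j) = Z j := by
    simp [b, Basis.sumExtend, Equiv.Set.sumDiffSubset]; rfl
  refine ⟨fun i => B.dualBasis hB b (Sum.inl i), fun i j => ?_⟩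
  rw [← hb, apply_dualBasis_left]
  simp [eq_comm]

variable [Fintype ι] [DecidableEq ι]

theorem exists_isotropic_dual_family [FiniteDimensional K V] [Invertible (2 : K)]
    (hBs : B.IsSymm) (hB : B.Nondegenerate) {Z : ι → V} (hZ : LinearIndependent K Z)
    (hZZ : ∀ i j, B (Z i) (Z j) = 0) :
    ∃ X : ι → V, (∀ i j, B (X i) (Z j) = if i = j then 1 else 0) ∧
      ∀ i j, B (X i) (X j) = 0 := by
  obtain ⟨X₀, hX₀⟩ := exists_dual_family hB hZ
  have hZX₀ (i j : ι) : B (Z j) (X₀ i) = if i = j then 1 else 0 := by rw [hBs.eq, hX₀]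
  -- the correction changes the Gram matrix `S` of `X₀` into `S - ⅟2 • S - ⅟2 • Sᵀ = 0`
  refine ⟨fun i => X₀ i - (⅟2 : K) • ∑ j, B (X₀ i) (X₀ j) • Z j, fun i j => ?_, fun i j => ?_⟩
  · simp [hX₀, hZZ]
  · simp only [map_sub, map_smul, map_sum, LinearMap.sub_apply, smul_apply, coe_sum, coe_smul,
      Finset.sum_apply, Pi.smul_apply, smul_eq_mul, hX₀, hZX₀, hZZ, mul_ite, mul_one, mul_zero,
      Finset.sum_ite_eq, Finset.mem_univ, if_true, Finset.sum_const_zero, sub_zero,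
      hBs.eq (X₀ j) (X₀ i)]
    linear_combination -B (X₀ i) (X₀ j) * invOf_two_add_invOf_two (R := K)

theorem span_range_sum_elim_eq_top [Fintype κ] {P : Submodule K V} {X Z : ι → V}
    {Y Ab : κ → V} (hP : span K (Set.range (Sum.elim Y Z)) = P)
    (hmemP : ∀ v, (∀ j, B v (Z j) = 0) → v ∈ P)
    (hXZ : ∀ i j, B (X i) (Z j) = if i = j then 1 else 0)
    (hAb : ∀ r, Y r - Ab r ∈ span K (Set.range Z)) :
    span K (Set.range (Sum.elim X (Sum.elim Ab Z))) = ⊤ := by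
  set S := span K (Set.range (Sum.elim X (Sum.elim Ab Z)))
  have hZS : span K (Set.range Z) ≤ S :=
    span_mono (by rintro _ ⟨j, rfl⟩; exact ⟨.inr (.inr j), rfl⟩)
  have hPS : P ≤ S := by
    rw [← hP, span_le]
    rintro _ ⟨r | j, rfl⟩
    · have := add_mem (subset_span ⟨.inr (.inl r), rfl⟩ : Ab r ∈ S) (hZS (hAb r))
      rwa [add_sub_cancel] at this
    · exact hZS (subset_span ⟨j, rfl⟩)
  refine eq_top_iff.2 fun v _ => ?_
  have hv : v - ∑ i, B v (Z i) • X i ∈ S := hPS (hmemP _ (apply_sub_sum_smul_eq_zero hXZ v))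
  have hX : ∑ i, B v (Z i) • X i ∈ S := sum_mem fun i _ => smul_mem _ _ (subset_span ⟨.inl i, rfl⟩)
  simpa only [sub_add_cancel] using add_mem hv hX

theorem exists_hyperbolic_basis [FiniteDimensional K V] [Invertible (2 : K)] [Fintype κ]
    [DecidableEq κ] (hBs : B.IsSymm) (hB : B.Nondegenerate) {P : Submodule K V} {Y : κ → V}
    {Z : ι → V} (hYZ : LinearIndependent K (Sum.elim Y Z))
    (hP : span K (Set.range (Sum.elim Y Z)) = P) (hZ : span K (Set.range Z) = B.orthogonal P) :
    ∃ (X : ι → V) (Ab A' : κ → V),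
      LinearIndependent K (Sum.elim X (Sum.elim Ab Z)) ∧
      span K (Set.range (Sum.elim X (Sum.elim Ab Z))) = ⊤ ∧
      (∀ r, Ab r ∈ P) ∧ (∀ i j, B (X i) (X j) = 0) ∧ (∀ r i, B (Ab r) (X i) = 0) ∧
      (∀ i j, B (X i) (Z j) = if i = j then 1 else 0) ∧ (∀ r, A' r ∈ P) ∧
      ∀ p q, B (Sum.elim Z (Sum.elim A' X) p) (Sum.elim X (Sum.elim Ab Z) q) =
        if p = q then 1 else 0 := by
  have hZli : LinearIndependent K Z := hYZ.comp Sum.inr Sum.inr_injective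
  have hZP (j : ι) : Z j ∈ P := hP ▸ subset_span ⟨.inr j, rfl⟩
  have hperpZ (u : V) (hu : u ∈ P) (j : ι) : B u (Z j) = 0 :=
    (hZ ▸ subset_span ⟨j, rfl⟩ : Z j ∈ B.orthogonal P) u hu
  have hmemP (v : V) (hv : ∀ j, B v (Z j) = 0) : v ∈ P := by
    rw [← orthogonal_orthogonal hB hBs.isRefl P, ← hZ]
    exact mem_orthogonal_span_of_forall (by rintro _ ⟨j, rfl⟩; rw [hBs.eq]; exact hv j)
  obtain ⟨X, hXZ, hXX⟩ := exists_isotropic_dual_family hBs hB hZli fun i j => hperpZ _ (hZP i) j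
  have hZX (i j : ι) : B (Z i) (X j) = if i = j then 1 else 0 := by
    rw [hBs.eq, hXZ]
    exact if_congr eq_comm rfl rfl
  set Ab : κ → V := fun r => Y r - ∑ i, B (Y r) (X i) • Z i
  have hAbP (r : κ) : Ab r ∈ P :=
    sub_mem (hP ▸ subset_span ⟨.inl r, rfl⟩) (sum_mem fun i _ => smul_mem _ _ (hZP i))
  have hAbX (r : κ) (j : ι) : B (Ab r) (X j) = 0 := apply_sub_sum_smul_eq_zero hZX _ j
  have hYAb (r : κ) : Y r - Ab r ∈ span K (Set.range Z) := by
    simp only [Ab, sub_sub_cancel]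
    exact sum_mem fun i _ => smul_mem _ _ (subset_span (Set.mem_range_self i))
  have hspan := span_range_sum_elim_eq_top hP hmemP hXZ hYAb
  have hcard : Fintype.card (ι ⊕ (κ ⊕ ι)) = finrank K V := by
    have hrkP := finrank_span_eq_card hYZ
    have hrkZ := finrank_span_eq_card hZli
    rw [hP] at hrkP
    rw [hZ, finrank_orthogonal hB, hrkP] at hrkZ
    have := P.finrank_le
    simp only [Fintype.card_sum] at *
    omega
  have hli := linearIndependent_of_top_le_span_of_card_eq_finrank hspan.ge hcard
  set b := Basis.mk hli hspan.ge
  refine ⟨X, Ab, fun r => B.dualBasis hB b (.inr (.inl r)), hli, hspan, hAbP, hXX, hAbX, hXZ,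
    fun r => hmemP _ fun j => ?_, ?_⟩
  · simpa [b] using apply_dualBasis_left hB b (.inr (.inl r)) (.inr (.inr j))
  · rintro (i | r | i) q
    · rcases q with j | s | j
      · simpa using hZX i j
      · simpa [hBs.eq (Z i)] using hperpZ _ (hAbP s) i
      · simpa using hperpZ _ (hZP i) j
    · simpa [b, eq_comm] using apply_dualBasis_left hB b (.inr (.inl r)) q
    · rcases q with j | s | j
      · simpa using hXX i j
      · simpa [hBs.eq (X i)] using hAbX s i
      · simpa using hXZ i j

end LinearMap.BilinForm

section FilteredAlgebra

variable {K V ι : Type*} [Field K] [AddCommGroup V] [Module K V] [FiniteDimensional K V]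
  {B : LinearMap.BilinForm K V} {W : ℤ → Submodule K V}

theorem bracket_mem_zero_of_pairing (hB : B.Nondegenerate) (hBr : B.IsRefl)
    (hW : ∀ i, 0 < i → W i = B.orthogonal (W (1 - i))) {N : ℤ} (hN : ∀ i, N ≤ i → W i = ⊥)
    {br : V →ₗ[K] V →ₗ[K] V} (hbr : ∀ i j x y, x ∈ W i → y ∈ W j → br x y ∈ W (i + j))
    [DecidableEq ι] {Z : ι → V} (hZW : ∀ l, 1 ≤ l → span K (Set.range Z ∩ W l) = W l)
    {i : ι} (hZi : Z i ≠ 0) (hZi1 : Z i ∈ W 1) {x : V}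
    (hx : ∀ j, B (Z j) x = if i = j then 1 else 0) : br (Z i) x ∈ W 0 := by
  obtain ⟨k, hk, hZk, hZk1⟩ := exists_mem_notMem_succ hN hZi hZi1
  have hxk : x ∈ W (-k) := by
    have h := congrArg B.orthogonal (hW (k + 1) (by omega))
    rw [LinearMap.BilinForm.orthogonal_orthogonal hB hBr, show 1 - (k + 1) = -k by ring] at h
    rw [← h, ← hZW (k + 1) (by omega)]
    refine LinearMap.BilinForm.mem_orthogonal_span_of_forall ?_
    rintro _ ⟨⟨j, rfl⟩, hj⟩
    rw [hx, if_neg]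
    rintro rfl
    exact hZk1 hj
  simpa using hbr k (-k) _ _ hZk hxk

end FilteredAlgebra

theorem adapted_frame_exists_general {A : Type*} [AddCommGroup A] [Module ℝ A]
    [FiniteDimensional ℝ A]
    (Ai : ℤ → Submodule ℝ A)
    (hdec : ∀ i : ℤ, Ai (i + 1) ≤ Ai i)
    (hsep : ∃ i₁ : ℤ, ∀ i : ℤ, i₁ ≤ i → Ai i = ⊥)
    (br : A →ₗ[ℝ] A →ₗ[ℝ] A)
    (hbr : ∀ (i j : ℤ) (x y : A), x ∈ Ai i → y ∈ Ai j → br x y ∈ Ai (i + j))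
    (B : A →ₗ[ℝ] A →ₗ[ℝ] ℝ)
    (hsymm : ∀ x y : A, B x y = B y x)
    (hnondeg : ∀ x : A, (∀ y : A, B x y = 0) → x = 0)
    (hann : ∀ i : ℤ, 0 < i → ∀ x : A, x ∈ Ai i ↔ ∀ y ∈ Ai (1 - i), B x y = 0) :
    ∃ (n m : ℕ) (Xb Zb : Fin n → A) (Ab A'b : Fin m → A),
      LinearIndependent ℝ (Sum.elim Xb (Sum.elim Ab Zb)) ∧
      Submodule.span ℝ (Set.range (Sum.elim Xb (Sum.elim Ab Zb))) = ⊤ ∧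
      (∀ i, Zb i ∈ Ai 1) ∧
      (∀ r, Ab r ∈ Ai 0) ∧
      (∀ i j, B (Xb i) (Xb j) = 0) ∧
      (∀ r i, B (Ab r) (Xb i) = 0) ∧
      (∀ i j, B (Xb i) (Zb j) = if i = j then 1 else 0) ∧
      (∀ i, br (Zb i) (Xb i) ∈ Ai 0) ∧
      (∀ r, A'b r ∈ Ai 0) ∧
      (∀ p q : Fin n ⊕ (Fin m ⊕ Fin n),
        B (Sum.elim Zb (Sum.elim A'b Xb) p) (Sum.elim Xb (Sum.elim Ab Zb) q) =
          if p = q then 1 else 0) := by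
  have hBs : LinearMap.BilinForm.IsSymm B := ⟨hsymm⟩
  have hB : B.Nondegenerate := hBs.isRefl.nondegenerate_iff_separatingLeft.2 hnondeg
  have hperp : ∀ i, 0 < i → Ai i = LinearMap.BilinForm.orthogonal B (Ai (1 - i)) := fun i hi => by
    ext x
    rw [hann i hi, LinearMap.BilinForm.mem_orthogonal_iff]
    exact forall₂_congr fun y _ => by rw [hsymm]
  obtain ⟨N, hN⟩ := hsep
  obtain ⟨m, n, Y, Z, hYZ, hP, hZ1, hZW⟩ :=
    exists_fin_adapted_family (antitone_int_of_succ_le hdec) hN 0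
  rw [zero_add] at hZ1 hZW
  have hZ : span ℝ (range Z) = LinearMap.BilinForm.orthogonal B (Ai 0) := by
    rw [← inter_eq_left.2 (range_subset_iff.2 hZ1), hZW 1 le_rfl]
    simpa using hperp 1 one_pos
  obtain ⟨X, Ab, A', hli, hspan, hAb, hXX, hAbX, hXZ, hA', hdual⟩ :=
    LinearMap.BilinForm.exists_hyperbolic_basis hBs hB hYZ hP hZ
  refine ⟨n, m, X, Z, Ab, A', hli, hspan, hZ1, hAb, hXX, hAbX, hXZ, fun i => ?_, hA', hdual⟩
  exact bracket_mem_zero_of_pairing hB hBs.isRefl hperp hN hbr hZW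
    ((hYZ.comp Sum.inr Sum.inr_injective).ne_zero i) (hZ1 i) fun j => by rw [hsymm, hXZ]

/-- Fiberwise linear-algebra content of Lemma 2.3: existence of adapted frames (bases) for a
finite-dimensional filtered Lie algebra `A` (modelled on `𝔭/𝔭₊`) with an invariant
nondegenerate symmetric bilinear form `B` compatible with the filtration. -/
theorem adapted_frame_exists {A : Type*} [AddCommGroup A] [Module ℝ A]
    [FiniteDimensional ℝ A]
    (Ai : ℤ → Submodule ℝ A)
    (hdec : ∀ i : ℤ, Ai (i + 1) ≤ Ai i)
    (hexh : ∃ i₀ : ℤ, ∀ i ≤ i₀, Ai i = ⊤)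
    (hsep : ∃ i₁ : ℤ, ∀ i : ℤ, i₁ ≤ i → Ai i = ⊥)
    (br : A →ₗ[ℝ] A →ₗ[ℝ] A)
    (hbr : ∀ (i j : ℤ) (x y : A), x ∈ Ai i → y ∈ Ai j → br x y ∈ Ai (i + j))
    (B : A →ₗ[ℝ] A →ₗ[ℝ] ℝ)
    (hsymm : ∀ x y : A, B x y = B y x)
    (hnondeg : ∀ x : A, (∀ y : A, B x y = 0) → x = 0)
    (hinv : ∀ x y z : A, B (br x y) z = - B y (br x z))
    (hann : ∀ i : ℤ, 0 < i → ∀ x : A, x ∈ Ai i ↔ ∀ y ∈ Ai (1 - i), B x y = 0) :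
    ∃ (n m : ℕ) (Xb Zb : Fin n → A) (Ab A'b : Fin m → A),
      LinearIndependent ℝ (Sum.elim Xb (Sum.elim Ab Zb)) ∧
      Submodule.span ℝ (Set.range (Sum.elim Xb (Sum.elim Ab Zb))) = ⊤ ∧
      (∀ i, Zb i ∈ Ai 1) ∧
      (∀ r, Ab r ∈ Ai 0) ∧
      (∀ i j, B (Xb i) (Xb j) = 0) ∧
      (∀ r i, B (Ab r) (Xb i) = 0) ∧
      (∀ i j, B (Xb i) (Zb j) = if i = j then 1 else 0) ∧
      (∀ i, br (Zb i) (Xb i) ∈ Ai 0) ∧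
      (∀ r, A'b r ∈ Ai 0) ∧
      (∀ p q : Fin n ⊕ (Fin m ⊕ Fin n),
        B (Sum.elim Zb (Sum.elim A'b Xb) p) (Sum.elim Xb (Sum.elim Ab Zb) q) =
          if p = q then 1 else 0) :=
  adapted_frame_exists_general Ai hdec hsep br hbr B hsymm hnondeg hann
end
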